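/- Let f : (0,∞) → (0,∞) be operator log-convex, H a complex Hilbert space, A, B, C ∈ B(H) strictly positive, and x ∈ H a unit vector. Then, writing the scalar perspective as g(a,b) = b·f(a/b) for a, b > 0 and the operator perspective as g(A,B) = B^{1/2} f(B^{-1/2}AB^{-1/2}) B^{1/2}, one has g(⟨((A+C)/2)x, x⟩, ⟨Bx, x⟩) ≤ √(⟨g(A,B)x, x⟩ · ⟨g(C,B)x, x⟩), where all inner products are (positive) real numbers. -/

import Mathlib

noncomputable section

open MeasureTheory

universe u

section Defs

variable {H : Type*} [NormedAddCommGroup H] [InnerProductSpace ℂ H] [CompleteSpace H]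

/-- An operator on a complex Hilbert space is *strictly positive* if it is positive
(in the Loewner order, hence self-adjoint) and invertible. -/
def StrictlyPos (A : H →L[ℂ] H) : Prop := 0 ≤ A ∧ IsUnit A

/-- Real powers of an operator, defined via the continuous functional calculus applied to
`t ↦ t ^ r`. -/
def opPow (A : H →L[ℂ] H) (r : ℝ) : H →L[ℂ] H := cfc (fun x : ℝ => x ^ r) A

/-- The arithmetic mean `A∇B = (A + B)/2`. -/
def arithMean (A B : H →L[ℂ] H) : H →L[ℂ] H := (2 : ℝ)⁻¹ • (A + B)

/-- The geometric mean `A♯B = B^{1/2} (B^{-1/2} A B^{-1/2})^{1/2} B^{1/2}`. -/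
def geomMean (A B : H →L[ℂ] H) : H →L[ℂ] H :=
  opPow B (1/2) * opPow (opPow B (-(1/2)) * A * opPow B (-(1/2))) (1/2) * opPow B (1/2)

/-- The harmonic mean `A!B = ((A⁻¹ + B⁻¹)/2)⁻¹`. -/
def harmMean (A B : H →L[ℂ] H) : H →L[ℂ] H :=
  Ring.inverse ((2 : ℝ)⁻¹ • (Ring.inverse A + Ring.inverse B))

/-- The perspective `g(A, B) = B^{1/2} f(B^{-1/2} A B^{-1/2}) B^{1/2}` of a function
`f : (0,∞) → (0,∞)`, where `f` acts through the continuous functional calculus. -/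
def persp (f : ℝ → ℝ) (A B : H →L[ℂ] H) : H →L[ℂ] H :=
  opPow B (1/2) * cfc f (opPow B (-(1/2)) * A * opPow B (-(1/2))) * opPow B (1/2)

/-- The (real) inner product `⟨Ax, x⟩`, which is a real number for self-adjoint `A`. -/
def rIP (A : H →L[ℂ] H) (x : H) : ℝ := (inner ℂ (A x) x : ℂ).re

end Defs

/-- A function `f : (0,∞) → (0,∞)` is *operator log-convex* if `f(A∇B) ≤ f(A)♯f(B)` for every
complex Hilbert space `H` and all strictly positive `A, B ∈ B(H)`, where `f` acts via the
continuous functional calculus. -/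
def OperatorLogConvex (f : ℝ → ℝ) : Prop :=
  ∀ (H : Type u) [NormedAddCommGroup H] [InnerProductSpace ℂ H] [CompleteSpace H]
    (A B : H →L[ℂ] H), StrictlyPos A → StrictlyPos B →
      cfc f (arithMean A B) ≤ geomMean (cfc f A) (cfc f B)

/-- The non-commutative `f`-divergence functional
`Θ(Ã, B̃) = ∫_T B_t^{1/2} f(B_t^{-1/2} A_t B_t^{-1/2}) B_t^{1/2} dμ(t)` (a Bochner integral). -/
def Theta (f : ℝ → ℝ) {T : Type*} [MeasurableSpace T] (μ : Measure T)
    {H : Type*} [NormedAddCommGroup H] [InnerProductSpace ℂ H] [CompleteSpace H]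
    (A B : T → H →L[ℂ] H) : H →L[ℂ] H :=
  ∫ t, persp f (A t) (B t) ∂μ

/-! Evaluated on scalar operators, operator log-convexity says that `f` is midpoint log-convex on
`(0, ∞)`; by AM-GM and continuity `f` is then convex. A supporting line of the convex `f` at the
mean value gives the Jensen inequality `‖y‖² f(⟨Ty, y⟩ / ‖y‖²) ≤ ⟨f(T)y, y⟩`, which for
`T = B^{-1/2} A B^{-1/2}` and `y = B^{1/2} x` reads `g(⟨Ax, x⟩, ⟨Bx, x⟩) ≤ ⟨g(A, B)x, x⟩`. Scalar
midpoint log-convexity of the perspective `b f(a / b)` in `a` then finishes the proof. -/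

open Set

lemma nonpos_of_midpoint_of_continuousOn_Icc {φ : ℝ → ℝ} (hφ : ContinuousOn φ (Icc 0 1))
    (h0 : φ 0 ≤ 0) (h1 : φ 1 ≤ 0)
    (hmid : ∀ s ∈ Icc (0 : ℝ) 1, ∀ t ∈ Icc (0 : ℝ) 1, φ ((s + t) / 2) ≤ (φ s + φ t) / 2) :
    ∀ t ∈ Icc (0 : ℝ) 1, φ t ≤ 0 := by
  by_contra! ⟨t₁, ht₁, hM⟩
  obtain ⟨tₘ, htₘ, hmax⟩ := isCompact_Icc.exists_isMaxOn ⟨t₁, ht₁⟩ hφ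
  have hMpos : 0 < φ tₘ := hM.trans_le (hmax ht₁)
  -- The leftmost maximiser `t₀` lies in `(0, 1)`, and the midpoint inequality for the pair
  -- `t₀ ± h` gives `φ t₀ < φ tₘ`, since `φ (t₀ - h) < φ tₘ`.
  have hK : IsCompact (Icc 0 1 ∩ φ ⁻¹' {φ tₘ}) :=
    isCompact_Icc.of_isClosed_subset
      (hφ.preimage_isClosed_of_isClosed isClosed_Icc isClosed_singleton) inter_subset_left
  obtain ⟨t₀, ⟨ht₀, hφt₀ : φ t₀ = φ tₘ⟩, hleast⟩ := hK.exists_isLeast ⟨tₘ, htₘ, rfl⟩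
  have ht₀0 : t₀ ≠ 0 := by rintro rfl; linarith
  have ht₀1 : t₀ ≠ 1 := by rintro rfl; linarith
  set h := min t₀ (1 - t₀)
  have hh : 0 < h := lt_min (lt_of_le_of_ne ht₀.1 ht₀0.symm) (by grind)
  have hl : t₀ - h ∈ Icc (0 : ℝ) 1 := ⟨by grind, by grind⟩
  have hr : t₀ + h ∈ Icc (0 : ℝ) 1 := ⟨by grind, by grind⟩
  have hφl : φ (t₀ - h) < φ tₘ := by
    refine (hmax hl).lt_of_ne fun heq => ?_
    linarith [hleast ⟨hl, heq⟩]
  have := hmid _ hl _ hr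
  rw [show (t₀ - h + (t₀ + h)) / 2 = t₀ by ring] at this
  have hφr : φ (t₀ + h) ≤ φ tₘ := hmax hr
  linarith

lemma convexOn_of_midpoint {E : Type*} [AddCommGroup E] [Module ℝ E] [TopologicalSpace E]
    [ContinuousAdd E] [ContinuousSMul ℝ E] {s : Set E} {f : E → ℝ} (hs : Convex ℝ s)
    (hf : ContinuousOn f s)
    (hmid : ∀ x ∈ s, ∀ y ∈ s, f ((2⁻¹ : ℝ) • (x + y)) ≤ (f x + f y) / 2) :
    ConvexOn ℝ s f := by
  refine ⟨hs, fun x hx y hy a b ha hb hab => ?_⟩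
  set γ : ℝ → E := fun t => t • x + (1 - t) • y
  have hγ : ∀ t ∈ Icc (0 : ℝ) 1, γ t ∈ s := fun t ht =>
    hs hx hy ht.1 (sub_nonneg.2 ht.2) (add_sub_cancel _ _)
  have key := nonpos_of_midpoint_of_continuousOn_Icc
    (φ := fun t => f (γ t) - (t * f x + (1 - t) * f y))
    ((hf.comp (by fun_prop) hγ).sub (by fun_prop)) (by simp [γ]) (by simp [γ]) ?_ a
    ⟨ha, by linarith⟩
  · obtain rfl : b = 1 - a := by linarith
    simpa [γ, smul_eq_mul] using key
  · intro p hp q hq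
    have := hmid _ (hγ p hp) _ (hγ q hq)
    rw [show (2⁻¹ : ℝ) • (γ p + γ q) = γ ((p + q) / 2) by simp only [γ]; module] at this
    linarith

lemma ConvexOn.exists_affine_le {s : Set ℝ} {f : ℝ → ℝ} (hf : ConvexOn ℝ s f) {x : ℝ}
    (hx : x ∈ interior s) : ∃ k : ℝ, ∀ y ∈ s, f x + k * (y - x) ≤ f y := by
  refine ⟨derivWithin f (Ioi x) x, fun y hy => ?_⟩
  rcases lt_trichotomy y x with hyx | rfl | hxy
  · have h := (hf.slope_le_leftDeriv_of_mem_interior hy hx hyx).trans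
      (hf.leftDeriv_le_rightDeriv_of_mem_interior hx)
    rw [slope_def_field, div_le_iff₀ (sub_pos.2 hyx)] at h
    linarith
  · simp
  · have h := hf.rightDeriv_le_slope_of_mem_interior hx hy hxy
    rw [slope_def_field, le_div_iff₀ (sub_pos.2 hxy)] at h
    linarith

section Operators

variable {H : Type*} [NormedAddCommGroup H] [InnerProductSpace ℂ H]

lemma StrictlyPos.isStrictlyPositive {A : H →L[ℂ] H} (hA : StrictlyPos A) :
    IsStrictlyPositive A :=
  IsStrictlyPositive.iff_of_unital.2 hA

lemma rIP_add (P Q : H →L[ℂ] H) (x : H) : rIP (P + Q) x = rIP P x + rIP Q x := by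
  simp [rIP]

lemma rIP_smul (r : ℝ) (P : H →L[ℂ] H) (x : H) : rIP (r • P) x = r * rIP P x := by
  simp [rIP]

lemma rIP_one (x : H) : rIP 1 x = ‖x‖ ^ 2 := by
  simp [rIP, inner_self_eq_norm_sq_to_K, ← Complex.ofReal_pow]

lemma rIP_algebraMap (r : ℝ) (x : H) :
    rIP (algebraMap ℝ (H →L[ℂ] H) r) x = r * ‖x‖ ^ 2 := by
  rw [Algebra.algebraMap_eq_smul_one, rIP_smul, rIP_one]

lemma rIP_mono {P Q : H →L[ℂ] H} (h : P ≤ Q) (x : H) : rIP P x ≤ rIP Q x := by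
  have := ((ContinuousLinearMap.le_def P Q).1 h).re_inner_nonneg_left x
  simpa [rIP, inner_sub_left] using this

lemma arithMean_algebraMap (a b : ℝ) :
    arithMean (algebraMap ℝ (H →L[ℂ] H) a) (algebraMap ℝ (H →L[ℂ] H) b)
      = algebraMap ℝ (H →L[ℂ] H) ((a + b) / 2) := by
  rw [arithMean, ← map_add, Algebra.smul_def, ← map_mul, inv_mul_eq_div]

lemma rIP_arithMean (A C : H →L[ℂ] H) (x : H) :
    rIP (arithMean A C) x = (rIP A x + rIP C x) / 2 := by
  rw [arithMean, rIP_smul, rIP_add, inv_mul_eq_div]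

variable [CompleteSpace H]

lemma rIP_conj {S : H →L[ℂ] H} (hS : IsSelfAdjoint S) (A : H →L[ℂ] H) (x : H) :
    rIP (S * A * S) x = rIP A (S x) :=
  congrArg Complex.re (hS.isSymmetric (A (S x)) x)

lemma rIP_mul_self {S : H →L[ℂ] H} (hS : IsSelfAdjoint S) (x : H) :
    rIP (S * S) x = ‖S x‖ ^ 2 := by
  simpa [rIP_one] using rIP_conj hS 1 x

lemma opPow_eq_rpow {A : H →L[ℂ] H} (hA : 0 ≤ A) (r : ℝ) : opPow A r = A ^ r :=
  (CFC.rpow_eq_cfc_real hA).symm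

lemma rIP_pos {T : H →L[ℂ] H} (hT : IsStrictlyPositive T) {x : H} (hx : x ≠ 0) :
    0 < rIP T x := by
  rw [← CFC.sqrt_mul_sqrt_self T, rIP_mul_self (CFC.sqrt_nonneg T).isSelfAdjoint]
  have hinj := ContinuousLinearMap.isUnit_iff_bijective.1 hT.isUnit_cfcSqrt |>.injective
  exact pow_pos (norm_pos_iff.2 fun h => hx (hinj (h.trans (map_zero _).symm))) 2

lemma ConvexOn.le_rIP_cfc {f : ℝ → ℝ} (hf : ConvexOn ℝ (Ioi 0) f) {T : H →L[ℂ] H}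
    (hT : IsStrictlyPositive T) {y : H} (hy : y ≠ 0) :
    ‖y‖ ^ 2 * f (rIP T y / ‖y‖ ^ 2) ≤ rIP (cfc f T) y := by
  have hy2 : 0 < ‖y‖ ^ 2 := by positivity
  set t₀ := rIP T y / ‖y‖ ^ 2
  have ht₀ : 0 < t₀ := div_pos (rIP_pos hT hy) hy2
  obtain ⟨k, hk⟩ := hf.exists_affine_le (by rwa [interior_Ioi])
  have hle : cfc (fun s => (f t₀ - k * t₀) + k * s) T ≤ cfc f T :=
    cfc_mono (fun s hs => by linarith [hk s (hT.spectrum_pos hs)])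
      (by fun_prop) ((hf.continuousOn isOpen_Ioi).mono fun _ hs => hT.spectrum_pos hs)
  rw [cfc_const_add _ _ _ (by fun_prop) hT.isSelfAdjoint,
    cfc_const_mul_id k T hT.isSelfAdjoint] at hle
  have h := rIP_mono hle y
  rw [rIP_add, rIP_algebraMap, rIP_smul, ← div_mul_cancel₀ (rIP T y) hy2.ne'] at h
  linarith

lemma ConvexOn.rIP_mul_le_rIP_persp {f : ℝ → ℝ} (hf : ConvexOn ℝ (Ioi 0) f)
    {A B : H →L[ℂ] H} (hA : IsStrictlyPositive A) (hB : IsStrictlyPositive B) {x : H}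
    (hx : x ≠ 0) : rIP B x * f (rIP A x / rIP B x) ≤ rIP (persp f A B) x := by
  have hsqrt : opPow B (1 / 2) = CFC.sqrt B := by rw [opPow_eq_rpow hB.nonneg, CFC.sqrt_eq_rpow]
  have hS : IsSelfAdjoint (opPow B (1 / 2)) := hsqrt ▸ (CFC.sqrt_nonneg B).isSelfAdjoint
  have hN : IsStrictlyPositive (opPow B (-(1 / 2))) :=
    opPow_eq_rpow hB.nonneg _ ▸ IsStrictlyPositive.rpow B _ hB
  have hNS (z : H) : opPow B (-(1 / 2)) (opPow B (1 / 2) z) = z := by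
    rw [← mul_apply_eq_comp, opPow_eq_rpow hB.nonneg, opPow_eq_rpow hB.nonneg,
      CFC.rpow_neg_mul_rpow _ hB, one_apply_eq_self]
  have hBx : rIP B x = ‖opPow B (1 / 2) x‖ ^ 2 := by
    rw [← rIP_mul_self hS, hsqrt, CFC.sqrt_mul_sqrt_self B hB.nonneg]
  have hAx :
      rIP A x = rIP (opPow B (-(1 / 2)) * A * opPow B (-(1 / 2))) (opPow B (1 / 2) x) := by
    rw [rIP_conj hN.isSelfAdjoint, hNS]
  have hÃ : IsStrictlyPositive (opPow B (-(1 / 2)) * A * opPow B (-(1 / 2))) :=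
    IsStrictlyPositive.conjugate_of_isUnit_of_isSelfAdjoint _ _ hN.isUnit hN.isSelfAdjoint hA
  rw [persp, rIP_conj hS, hBx, hAx]
  exact hf.le_rIP_cfc hÃ fun h => hx (by rw [← hNS x, h, map_zero])

lemma opPow_algebraMap (a r : ℝ) :
    opPow (algebraMap ℝ (H →L[ℂ] H) a) r = algebraMap ℝ (H →L[ℂ] H) (a ^ r) :=
  cfc_algebraMap _ _

lemma geomMean_algebraMap {a b : ℝ} (ha : 0 < a) (hb : 0 < b) :
    geomMean (algebraMap ℝ (H →L[ℂ] H) a) (algebraMap ℝ (H →L[ℂ] H) b)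
      = algebraMap ℝ (H →L[ℂ] H) (√(a * b)) := by
  simp only [geomMean, opPow_algebraMap, ← map_mul]
  congr 1
  have hb' : 0 < √b := Real.sqrt_pos.2 hb
  simp only [Real.rpow_neg hb.le, ← Real.sqrt_eq_rpow]
  rw [show (√b)⁻¹ * a * (√b)⁻¹ = a / b by field_simp; rw [Real.sq_sqrt hb.le],
    Real.sqrt_div' _ hb.le, Real.sqrt_mul ha.le]
  field_simp

end Operators

lemma OperatorLogConvex.le_sqrt_mul {f : ℝ → ℝ} (hf : OperatorLogConvex.{u} f) {a c : ℝ}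
    (ha : 0 < a) (hc : 0 < c) (hfa : 0 < f a) (hfc : 0 < f c) :
    f ((a + c) / 2) ≤ √(f a * f c) := by
  -- `OperatorLogConvex.{u}` only speaks about spaces in `Type u`, hence the `ULift`.
  let E := EuclideanSpace ℂ (ULift.{u} (Fin 1))
  have hpos {r : ℝ} (hr : 0 < r) : StrictlyPos (algebraMap ℝ (E →L[ℂ] E) r) :=
    IsStrictlyPositive.iff_of_unital.1 (isStrictlyPositive_algebraMap hr)
  have := hf E _ _ (hpos ha) (hpos hc)
  rwa [arithMean_algebraMap, cfc_algebraMap, cfc_algebraMap, cfc_algebraMap,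
    geomMean_algebraMap hfa hfc, algebraMap_le_algebraMap] at this

lemma OperatorLogConvex.convexOn {f : ℝ → ℝ} (hf : OperatorLogConvex.{u} f)
    (hcont : ContinuousOn f (Ioi 0)) (hpos : ∀ x, 0 < x → 0 < f x) :
    ConvexOn ℝ (Ioi 0) f := by
  refine convexOn_of_midpoint (convex_Ioi 0) hcont fun a (ha : 0 < a) c (hc : 0 < c) => ?_
  calc f ((2⁻¹ : ℝ) • (a + c)) = f ((a + c) / 2) := by rw [smul_eq_mul, inv_mul_eq_div]
    _ ≤ √(f a * f c) := hf.le_sqrt_mul ha hc (hpos a ha) (hpos c hc)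
    _ ≤ (f a + f c) / 2 := Real.sqrt_le_iff.2 ⟨by linarith [hpos a ha, hpos c hc],
        by nlinarith [sq_nonneg (f a - f c)]⟩

lemma OperatorLogConvex.perspective_midpoint_le {f : ℝ → ℝ} (hf : OperatorLogConvex.{u} f)
    (hpos : ∀ x, 0 < x → 0 < f x) {a b c : ℝ} (ha : 0 < a) (hb : 0 < b) (hc : 0 < c) :
    b * f ((a + c) / 2 / b) ≤ √((b * f (a / b)) * (b * f (c / b))) :=
  calc b * f ((a + c) / 2 / b) = b * f ((a / b + c / b) / 2) := by ring_nf
    _ ≤ b * √(f (a / b) * f (c / b)) := by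
      gcongr
      exact hf.le_sqrt_mul (div_pos ha hb) (div_pos hc hb) (hpos _ (div_pos ha hb))
        (hpos _ (div_pos hc hb))
    _ = √((b * f (a / b)) * (b * f (c / b))) := by
      rw [mul_mul_mul_comm, Real.sqrt_mul (mul_self_nonneg b), Real.sqrt_mul_self hb.le]

theorem stmt_17 (f : ℝ → ℝ) (hf_cont : ContinuousOn f (Set.Ioi 0))
    (hf_pos : ∀ x : ℝ, 0 < x → 0 < f x) (hf : OperatorLogConvex f)
    {H : Type*} [NormedAddCommGroup H] [InnerProductSpace ℂ H] [CompleteSpace H]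
    (A B C : H →L[ℂ] H) (hA : StrictlyPos A) (hB : StrictlyPos B) (hC : StrictlyPos C)
    (x : H) (hx : ‖x‖ = 1) :
    rIP B x * f (rIP (arithMean A C) x / rIP B x) ≤
      Real.sqrt (rIP (persp f A B) x * rIP (persp f C B) x) := by
  have hx0 : x ≠ 0 := norm_ne_zero_iff.1 (by rw [hx]; exact one_ne_zero)
  have ha := rIP_pos hA.isStrictlyPositive hx0
  have hb := rIP_pos hB.isStrictlyPositive hx0
  have hc := rIP_pos hC.isStrictlyPositive hx0
  have hconv := hf.convexOn hf_cont hf_pos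
  have hJA := hconv.rIP_mul_le_rIP_persp hA.isStrictlyPositive hB.isStrictlyPositive hx0
  have hJC := hconv.rIP_mul_le_rIP_persp hC.isStrictlyPositive hB.isStrictlyPositive hx0
  rw [rIP_arithMean]
  refine (hf.perspective_midpoint_le hf_pos ha hb hc).trans (Real.sqrt_le_sqrt ?_)
  exact mul_le_mul hJA hJC (mul_pos hb (hf_pos _ (div_pos hc hb))).le
    ((mul_pos hb (hf_pos _ (div_pos ha hb))).le.trans hJA)
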